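/- arXiv:2405.16095 — 2 statements merged into one kernel-verified Lean document; each statement's English description precedes it below -/
import Mathlib

section
/- Let γ > 1 and let a, b ≥ 0 with a ≤ b. Then ∑_{j=2}^{k} 1/(2 sin((j-1)π/k))^γ · k^{-γ} converges as k → ∞ (k even) to (2/(2π)^γ) ∑_{i=1}^{∞} 1/i^γ = (2/(2π)^γ) ζ(γ). -/
open Real Finset Filter Topology

lemma aux_sum (γ : ℝ) (n : ℕ) (hn : 1 ≤ n) :
    ((2 * n : ℕ) : ℝ) ^ (-γ) *
        ∑ j ∈ Finset.Icc 2 (2 * n),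
          (2 * Real.sin (((j : ℝ) - 1) * π / ((2 * n : ℕ) : ℝ))) ^ (-γ)
      = 2 * ∑ i ∈ Finset.Ioc 0 (n - 1),
            ((4 * (n : ℝ)) * Real.sin ((i : ℝ) * π / (2 * n))) ^ (-γ)
        + (4 * (n : ℝ)) ^ (-γ) := by
  have hπ := Real.pi_pos
  have hn0 : (0:ℝ) < n := by exact_mod_cast hn
  -- abbreviation
  set t : ℕ → ℝ := fun i => ((4 * (n : ℝ)) * Real.sin ((i : ℝ) * π / (2 * n))) ^ (-γ) with ht
  -- Step 1: fold the constant into the sum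
  have step1 : ((2 * n : ℕ) : ℝ) ^ (-γ) *
        ∑ j ∈ Finset.Icc 2 (2 * n),
          (2 * Real.sin (((j : ℝ) - 1) * π / ((2 * n : ℕ) : ℝ))) ^ (-γ)
      = ∑ i ∈ Finset.Ioc 0 (2 * n - 1), t i := by
    rw [Finset.mul_sum]
    refine Finset.sum_bij (fun j _ => j - 1) ?_ ?_ ?_ ?_
    · intro j hj
      simp only [Finset.mem_Icc] at hj
      simp only [Finset.mem_Ioc]
      omega
    · intro a ha b hb h
      simp only [Finset.mem_Icc] at ha hb
      omega
    · intro i hi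
      simp only [Finset.mem_Ioc] at hi
      exact ⟨i + 1, by simp only [Finset.mem_Icc]; omega, by omega⟩
    · intro j hj
      simp only [Finset.mem_Icc] at hj
      have hcast : ((j - 1 : ℕ) : ℝ) = (j : ℝ) - 1 := by
        have : (1:ℕ) ≤ j := by omega
        push_cast [Nat.cast_sub this]
        ring
      have hsin : (0:ℝ) ≤ Real.sin (((j : ℝ) - 1) * π / (2 * n)) := by
        apply Real.sin_nonneg_of_nonneg_of_le_pi
        · have h1j : (1:ℝ) ≤ (j:ℝ) := by exact_mod_cast (by omega : (1:ℕ) ≤ j)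
          apply div_nonneg (mul_nonneg (by linarith) hπ.le) (by positivity)
        · rw [div_le_iff₀ (by positivity)]
          have : (j:ℝ) ≤ 2 * n := by exact_mod_cast hj.2
          nlinarith
      rw [ht]
      push_cast
      rw [hcast, ← Real.mul_rpow (by positivity) (by positivity)]
      ring_nf
  rw [step1]
  -- Step 2: split and reflect
  have h1 : (1:ℕ) ≤ n := hn
  have split1 : ∑ i ∈ Finset.Ioc 0 n, t i + ∑ i ∈ Finset.Ioc n (2 * n - 1), t i
      = ∑ i ∈ Finset.Ioc 0 (2 * n - 1), t i :=
    Finset.sum_Ioc_consecutive _ (by omega) (by omega)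
  have split2 : ∑ i ∈ Finset.Ioc 0 n, t i
      = ∑ i ∈ Finset.Ioc 0 (n - 1), t i + t n := by
    have : n - 1 + 1 = n := by omega
    rw [← this, Finset.sum_Ioc_succ_top (by omega)]
    rw [Nat.add_sub_cancel]
  have refl1 : ∑ i ∈ Finset.Ioc n (2 * n - 1), t i
      = ∑ i ∈ Finset.Ioc 0 (n - 1), t i := by
    refine Finset.sum_bij (fun i _ => 2 * n - i) ?_ ?_ ?_ ?_
    · intro i hi; simp only [Finset.mem_Ioc] at hi ⊢; omega
    · intro a ha b hb h; simp only [Finset.mem_Ioc] at ha hb; omega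
    · intro i hi
      simp only [Finset.mem_Ioc] at hi
      exact ⟨2 * n - i, by simp only [Finset.mem_Ioc]; omega, by omega⟩
    · intro i hi
      simp only [Finset.mem_Ioc] at hi
      have hle : i ≤ 2 * n := by omega
      have hcast : ((2 * n - i : ℕ) : ℝ) = 2 * (n:ℝ) - i := by
        push_cast [Nat.cast_sub hle]; ring
      rw [ht]
      simp only [hcast]
      congr 2
      have harg : (2 * (n:ℝ) - i) * π / (2 * n) = π - (i:ℝ) * π / (2 * n) := by
        field_simp
      rw [harg, Real.sin_pi_sub]
  have tn : t n = (4 * (n : ℝ)) ^ (-γ) := by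
    rw [ht]
    simp only
    have : (n : ℝ) * π / (2 * n) = π / 2 := by field_simp
    rw [this, Real.sin_pi_div_two, mul_one]
  rw [← split1, split2, refl1, tn]
  ring


/-- Riemann-sum limit for the inverse distances of equally spaced points on the
unit circle: along even `k`,
`k^{-γ} ∑_{j=2}^{k} (2 sin((j-1)π/k))^{-γ} → 2^{1-γ} π^{-γ} ζ(γ)`,
where `ζ(γ) = ∑_{i≥1} i^{-γ}`. -/
theorem stmt12 (γ : ℝ) (hγ : 1 < γ) :
    Filter.Tendsto
      (fun n : ℕ =>
        ((2 * n : ℕ) : ℝ) ^ (-γ) *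
          ∑ j ∈ Finset.Icc 2 (2 * n),
            (2 * Real.sin (((j : ℝ) - 1) * π / ((2 * n : ℕ) : ℝ))) ^ (-γ))
      Filter.atTop
      (nhds ((2 : ℝ) ^ (1 - γ) * π ^ (-γ) * ∑' i : ℕ, ((i : ℝ) + 1) ^ (-γ))) := by
  have hπ := Real.pi_pos
  set F : ℕ → ℕ → ℝ := fun n i =>
    if i + 2 ≤ n then ((4 * (n : ℝ)) * Real.sin (((i : ℝ) + 1) * π / (2 * n))) ^ (-γ) else 0
    with hF
  set g : ℕ → ℝ := fun i => (2 * ((i : ℝ) + 1) * π) ^ (-γ) with hg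
  set bound : ℕ → ℝ := fun i => ((4 : ℝ) * ((i : ℝ) + 1)) ^ (-γ) with hbound
  -- summability of the bound
  have hS : Summable (fun i : ℕ => ((i : ℝ) + 1) ^ (-γ)) := by
    have h0 : Summable (fun i : ℕ => ((i : ℝ)) ^ (-γ)) :=
      Real.summable_nat_rpow.mpr (by linarith)
    have h1 := (summable_nat_add_iff 1).mpr h0
    refine h1.congr fun i => ?_
    push_cast
    ring_nf
  have hbound_sum : Summable bound := by
    have hb : bound = fun i : ℕ => (4 : ℝ) ^ (-γ) * ((i : ℝ) + 1) ^ (-γ) := by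
      funext i
      rw [hbound, ← Real.mul_rpow (by norm_num) (by positivity)]
    rw [hb]
    exact hS.mul_left _
  -- pointwise convergence
  have hpt : ∀ i : ℕ, Filter.Tendsto (fun n => F n i) Filter.atTop (𝓝 (g i)) := by
    intro i
    have hc0 : (0 : ℝ) < (i : ℝ) + 1 := by positivity
    have h1 : Filter.Tendsto (fun n : ℕ => ((i : ℝ) + 1) * π / (2 * n)) Filter.atTop
        (𝓝[≠] (0 : ℝ)) := by
      rw [tendsto_nhdsWithin_iff]
      constructor
      · have h2 : Filter.Tendsto (fun n : ℕ => (((i : ℝ) + 1) * π / 2) * (1 / (n : ℝ)))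
            Filter.atTop (𝓝 ((((i : ℝ) + 1) * π / 2) * 0)) :=
          tendsto_const_nhds.mul tendsto_one_div_atTop_nhds_zero_nat
        rw [mul_zero] at h2
        refine h2.congr fun n => ?_
        by_cases hn : n = 0
        · simp [hn]
        · have hne : (n : ℝ) ≠ 0 := Nat.cast_ne_zero.mpr hn
          field_simp
      · filter_upwards [Filter.eventually_ge_atTop 1] with n hn
        have hn0 : (0 : ℝ) < n := by exact_mod_cast hn
        have : 0 < ((i : ℝ) + 1) * π / (2 * n) := by positivity
        exact this.ne'
    have h2 : Filter.Tendsto (fun x : ℝ => Real.sin x / x) (𝓝[≠] (0 : ℝ)) (𝓝 1) := by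
      have hd := Real.hasDerivAt_sin 0
      rw [hasDerivAt_iff_tendsto_slope] at hd
      rw [Real.cos_zero] at hd
      refine hd.congr fun x => ?_
      rw [slope_def_field, Real.sin_zero, sub_zero, sub_zero]
    have h3 := h2.comp h1
    have h4 : Filter.Tendsto
        (fun n : ℕ => (2 * ((i : ℝ) + 1) * π) *
          (Real.sin (((i : ℝ) + 1) * π / (2 * n)) / (((i : ℝ) + 1) * π / (2 * n))))
        Filter.atTop (𝓝 (2 * ((i : ℝ) + 1) * π)) := by
      have h5 := (tendsto_const_nhds (x := (2 * ((i : ℝ) + 1) * π))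
        (f := (Filter.atTop : Filter ℕ))).mul h3
      rw [mul_one] at h5
      exact h5
    have h5 := h4.rpow_const (p := -γ) (Or.inl (by positivity))
    have hgi : g i = (2 * ((i : ℝ) + 1) * π) ^ (-γ) := by rw [hg]
    rw [hgi]
    refine Filter.Tendsto.congr' ?_ h5
    filter_upwards [Filter.eventually_ge_atTop (i + 2)] with n hn
    have hn0 : (0 : ℝ) < n := by exact_mod_cast (by omega : 0 < n)
    have hFn : F n i = ((4 * (n : ℝ)) * Real.sin (((i : ℝ) + 1) * π / (2 * n))) ^ (-γ) := by
      rw [hF]; exact if_pos hn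
    rw [hFn]
    congr 1
    have hne : ((i : ℝ) + 1) * π ≠ 0 := by positivity
    have hnne : (n : ℝ) ≠ 0 := hn0.ne'
    field_simp
    ring
  -- uniform bound
  have hbd : ∀ᶠ n in Filter.atTop, ∀ i, ‖F n i‖ ≤ bound i := by
    filter_upwards [Filter.eventually_ge_atTop 1] with n hn i
    by_cases hin : i + 2 ≤ n
    · have hn0 : (0 : ℝ) < n := by exact_mod_cast (by omega : 0 < n)
      have hin' : ((i : ℝ) + 1) ≤ n := by exact_mod_cast (by omega : i + 1 ≤ n)
      have hx0 : 0 ≤ ((i : ℝ) + 1) * π / (2 * n) := by positivity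
      have hx1 : ((i : ℝ) + 1) * π / (2 * n) ≤ π / 2 := by
        rw [div_le_div_iff₀ (by positivity) (by norm_num)]
        nlinarith
      have hsin := Real.mul_le_sin hx0 hx1
      have hbase : (4 : ℝ) * ((i : ℝ) + 1) ≤ (4 * (n : ℝ)) *
          Real.sin (((i : ℝ) + 1) * π / (2 * n)) := by
        have h6 : (2 / π) * (((i : ℝ) + 1) * π / (2 * n)) = ((i : ℝ) + 1) / n := by
          field_simp
        rw [h6] at hsin
        have h7 : (4 * (n : ℝ)) * (((i : ℝ) + 1) / n) ≤ (4 * (n : ℝ)) *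
            Real.sin (((i : ℝ) + 1) * π / (2 * n)) := by
          apply mul_le_mul_of_nonneg_left hsin (by positivity)
        calc (4 : ℝ) * ((i : ℝ) + 1) = (4 * (n : ℝ)) * (((i : ℝ) + 1) / n) := by
              field_simp
          _ ≤ _ := h7
      have hFn : F n i = ((4 * (n : ℝ)) * Real.sin (((i : ℝ) + 1) * π / (2 * n))) ^ (-γ) := by
        rw [hF]; exact if_pos hin
      have hsin0 : 0 ≤ Real.sin (((i : ℝ) + 1) * π / (2 * n)) :=
        Real.sin_nonneg_of_nonneg_of_le_pi hx0 (le_trans hx1 (by linarith))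
      rw [hFn, Real.norm_eq_abs,
        abs_of_nonneg (Real.rpow_nonneg (mul_nonneg (by positivity) hsin0) _)]
      exact Real.rpow_le_rpow_of_nonpos (by positivity) hbase (by linarith)
    · have hFn : F n i = 0 := by rw [hF]; exact if_neg hin
      rw [hFn, norm_zero, hbound]
      exact Real.rpow_nonneg (by positivity) _
  have hmain := tendsto_tsum_of_dominated_convergence hbound_sum hpt hbd
  -- tail term
  have htail : Filter.Tendsto (fun n : ℕ => (4 * (n : ℝ)) ^ (-γ)) Filter.atTop (𝓝 0) := by
    apply (tendsto_rpow_neg_atTop (by linarith : (0:ℝ) < γ)).comp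
    exact Filter.Tendsto.const_mul_atTop (by norm_num) tendsto_natCast_atTop_atTop
  have hfin := (hmain.const_mul (2 : ℝ)).add htail
  rw [add_zero] at hfin
  -- identify the limit value
  have hval : (2 : ℝ) * ∑' i, g i
      = (2 : ℝ) ^ (1 - γ) * π ^ (-γ) * ∑' i : ℕ, ((i : ℝ) + 1) ^ (-γ) := by
    have hgi : ∀ i : ℕ, g i = ((2 * π : ℝ)) ^ (-γ) * ((i : ℝ) + 1) ^ (-γ) := by
      intro i
      rw [hg, ← Real.mul_rpow (by positivity) (by positivity)]
      ring_nf
    simp_rw [hgi]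
    rw [tsum_mul_left]
    rw [Real.mul_rpow (by norm_num) hπ.le]
    rw [show (1 : ℝ) - γ = 1 + (-γ) by ring, Real.rpow_add (by norm_num), Real.rpow_one]
    ring
  rw [← hval]
  -- identify the functions eventually
  refine Filter.Tendsto.congr' ?_ hfin
  filter_upwards [Filter.eventually_ge_atTop 1] with n hn
  have hts : ∑' i, F n i = ∑ i ∈ Finset.Ioc 0 (n - 1),
      ((4 * (n : ℝ)) * Real.sin ((i : ℝ) * π / (2 * n))) ^ (-γ) := by
    rw [tsum_eq_sum (s := Finset.range (n - 1)) (by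
      intro i hi
      rw [hF]
      exact if_neg (by simp only [Finset.mem_range] at hi; omega))]
    refine Finset.sum_bij (fun i _ => i + 1) ?_ ?_ ?_ ?_
    · intro i hi; simp only [Finset.mem_range] at hi; simp only [Finset.mem_Ioc]; omega
    · intro a ha b hb h; omega
    · intro i hi
      simp only [Finset.mem_Ioc] at hi
      refine ⟨i - 1, ?_, ?_⟩
      · simp only [Finset.mem_range]; omega
      · omega
    · intro i hi
      simp only [Finset.mem_range] at hi
      rw [hF]
      dsimp only
      rw [if_pos (show i + 2 <= n by omega)]
      push_cast
      ring_nf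
  rw [hts]
  exact (aux_sum γ n hn).symm
end

section
/- Let y ∈ Ω₁ := {y = (y₁,y₂,y₃,y'') ∈ ℝ³ × ℝ^{N-3} : ⟨(y₁,y₂)/|(y₁,y₂)|, (1,0)⟩ ≥ cos(π/k)}, and let x_j^+ (j = 1,…,k) be the k equally spaced points at angles 2(j-1)π/k on the circle of radius ρ = r̄√(1-h̄²) at height r̄h̄. Then there exists a constant C > 0 (independent of k, y, j) such that |y - x_j^+| ≥ C |x_j^+ - x_1^+| for all j = 1,…,k. -/
open Real Finset

/-- The concentration points on the circles of the cylinder. -/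
noncomputable def pt (N : ℕ) (ρ z : ℝ) (w : Fin N → ℝ) (θ : ℝ) : EuclideanSpace ℝ (Fin N) :=
  WithLp.toLp 2 (fun i => if (i : ℕ) = 0 then ρ * Real.cos θ
    else if (i : ℕ) = 1 then ρ * Real.sin θ
    else if (i : ℕ) = 2 then z else w i)

set_option maxHeartbeats 1000000 in
/-- Core planar estimate: if the point `(s cos φ, s sin φ)` lies in the sector `|φ| ≤ u`
and `θ ∈ [2u, 2π - 2u]`, then its distance to `(ρ cos θ, ρ sin θ)` is at least
`ρ sin(θ/2)/π`. -/
lemma core_est (ρ s φ θ u : ℝ) (hρ : 0 ≤ ρ) (hs : 0 ≤ s) (hu : 0 < u) (hu2 : u ≤ π / 2)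
    (hφ : |φ| ≤ u) (hθ1 : 2 * u ≤ θ) (hθ2 : θ ≤ 2 * π - 2 * u) :
    (ρ * Real.sin (θ / 2) / π) ^ 2 ≤
      (s * Real.cos φ - ρ * Real.cos θ) ^ 2 + (s * Real.sin φ - ρ * Real.sin θ) ^ 2 := by
  have hπ : (0 : ℝ) < π := Real.pi_pos
  set a : ℝ := θ - u with ha_def
  set b : ℝ := 2 * π - θ - u with hb_def
  set m : ℝ := min a b with hm_def
  set t : ℝ := min (θ / 2) (π - θ / 2) with ht_def
  have ha : u ≤ a := by simp only [ha_def]; linarith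
  have hb : u ≤ b := by simp only [hb_def]; linarith
  have hm0 : 0 < m := lt_of_lt_of_le hu (le_min ha hb)
  have hta : θ / 2 ≤ a := by simp only [ha_def]; linarith
  have htb : π - θ / 2 ≤ b := by simp only [hb_def]; linarith
  have htm : t ≤ m := min_le_min hta htb
  have ht0 : 0 ≤ t := le_min (by linarith) (by linarith)
  have htpi2 : t ≤ π / 2 := by
    rcases le_total (θ / 2) (π / 2) with h | h
    · exact le_trans (min_le_left _ _) h
    · exact le_trans (min_le_right _ _) (by linarith)
  have hsin_half_nonneg : 0 ≤ Real.sin (θ / 2) :=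
    Real.sin_nonneg_of_nonneg_of_le_pi (by linarith) (by linarith)
  have hsin_t : Real.sin (θ / 2) ≤ t := by
    refine le_min (Real.sin_le (by linarith)) ?_
    have h1 : Real.sin (θ / 2) = Real.sin (π - θ / 2) := (Real.sin_pi_sub _).symm
    rw [h1]
    exact Real.sin_le (by linarith)
  -- the angle difference bound
  have hφ1 : -u ≤ φ := neg_le_of_abs_le hφ
  have hφ2 : φ ≤ u := le_of_abs_le hφ
  have hd : Real.cos (φ - θ) ≤ Real.cos m := by
    have hcd : Real.cos (φ - θ) = Real.cos (θ - φ) := by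
      rw [← Real.cos_neg (φ - θ)]; ring_nf
    rw [hcd]
    rcases le_total (θ - φ) π with h | h
    · exact Real.cos_le_cos_of_nonneg_of_le_pi hm0.le h
        (le_trans (le_trans (min_le_left _ _) (by simp only [ha_def]; linarith)) le_rfl)
    · have h2 : Real.cos (θ - φ) = Real.cos (2 * π - (θ - φ)) := by
        rw [Real.cos_two_pi_sub]
      rw [h2]
      refine Real.cos_le_cos_of_nonneg_of_le_pi hm0.le (by linarith) ?_
      have : m ≤ b := min_le_right _ _
      simp only [hb_def] at this
      linarith
  have expand : (s * Real.cos φ - ρ * Real.cos θ) ^ 2 + (s * Real.sin φ - ρ * Real.sin θ) ^ 2 =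
      s ^ 2 + ρ ^ 2 - 2 * s * ρ * Real.cos (φ - θ) := by
    rw [Real.cos_sub]
    linear_combination s ^ 2 * Real.sin_sq_add_cos_sq φ + ρ ^ 2 * Real.sin_sq_add_cos_sq θ
  rw [expand]
  have hstep : s ^ 2 + ρ ^ 2 - 2 * s * ρ * Real.cos m ≤
      s ^ 2 + ρ ^ 2 - 2 * s * ρ * Real.cos (φ - θ) := by
    have := mul_le_mul_of_nonneg_left hd (mul_nonneg hs hρ)
    nlinarith [this]
  have hmπ : m ≤ π := by
    rcases le_total a b with h | h
    · have : m = a := min_eq_left h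
      rw [this]; simp only [ha_def]; linarith
    · have : m = b := min_eq_right h
      rw [this]; simp only [hb_def]; linarith
  rcases le_or_gt 0 (Real.cos m) with hcm | hcm
  · -- cos m ≥ 0 forces m ≤ π/2
    have hm2 : m ≤ π / 2 := by
      by_contra hcon
      push_neg at hcon
      have := Real.cos_lt_cos_of_nonneg_of_le_pi (by linarith : (0:ℝ) ≤ π / 2) hmπ hcon
      rw [Real.cos_pi_div_two] at this
      linarith
    have hsin_m : Real.sin t ≤ Real.sin m :=
      Real.sin_le_sin_of_le_of_le_pi_div_two (by linarith) hm2 htm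
    have h2t : 2 / π * t ≤ Real.sin t := Real.mul_le_sin ht0 htpi2
    have hkey : Real.sin (θ / 2) / π ≤ Real.sin m := by
      have h1 : Real.sin (θ / 2) / π ≤ 2 / π * t := by
        rw [div_le_iff₀ hπ]
        have h2 : 2 / π * t * π = 2 * t := by field_simp
        rw [h2]
        linarith
      linarith
    have hmul : ρ * Real.sin (θ / 2) / π ≤ ρ * Real.sin m := by
      rw [mul_div_assoc]
      exact mul_le_mul_of_nonneg_left hkey hρ
    have hnn : 0 ≤ ρ * Real.sin (θ / 2) / π := by positivity
    have hsq : (ρ * Real.sin (θ / 2) / π) ^ 2 ≤ (ρ * Real.sin m) ^ 2 := by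
      exact pow_le_pow_left₀ hnn hmul 2
    have hexp : s ^ 2 + ρ ^ 2 - 2 * s * ρ * Real.cos m - (ρ * Real.sin m) ^ 2 =
        (s - ρ * Real.cos m) ^ 2 := by
      linear_combination (-(ρ ^ 2)) * Real.sin_sq_add_cos_sq m
    have hfin : (ρ * Real.sin m) ^ 2 ≤ s ^ 2 + ρ ^ 2 - 2 * s * ρ * Real.cos m := by
      have := sq_nonneg (s - ρ * Real.cos m)
      linarith
    linarith
  · -- cos m < 0 : distance at least ρ
    have h1 : ρ ^ 2 ≤ s ^ 2 + ρ ^ 2 - 2 * s * ρ * Real.cos m := by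
      have h3 : 0 ≤ s * ρ * (-Real.cos m) :=
        mul_nonneg (mul_nonneg hs hρ) (by linarith)
      nlinarith [sq_nonneg s]
    have h2 : (ρ * Real.sin (θ / 2) / π) ^ 2 ≤ ρ ^ 2 := by
      have hsle : Real.sin (θ / 2) ≤ 1 := Real.sin_le_one _
      have hπ1 : (1 : ℝ) ≤ π := by linarith [Real.pi_gt_three]
      have : ρ * Real.sin (θ / 2) / π ≤ ρ := by
        rw [div_le_iff₀ hπ]
        nlinarith
      have hnn : 0 ≤ ρ * Real.sin (θ / 2) / π := by positivity
      nlinarith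
    linarith

set_option maxHeartbeats 1000000 in
/-- Inequality (2.10): in the sector `Ω₁`, `|y - x_j^+| ≥ C |x_j^+ - x_1^+|`. -/
theorem stmt16 (N : ℕ) (hN : 4 ≤ N) (r h : ℝ) (hr : 0 < r) (hh : h ∈ Set.Ioo (0:ℝ) 1)
    (w : Fin N → ℝ) :
    ∃ C > 0, ∀ k : ℕ, 2 ≤ k →
      ∀ y : EuclideanSpace ℝ (Fin N),
        y ∈ {y : EuclideanSpace ℝ (Fin N) |
          Real.cos (π / k) ≤
            y ⟨0, by omega⟩ / Real.sqrt (y ⟨0, by omega⟩ ^ 2 + y ⟨1, by omega⟩ ^ 2)} →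
        ∀ j, 1 ≤ j → j ≤ k →
          C * dist (pt N (r * Real.sqrt (1 - h ^ 2)) (r * h) w (2 * ((j : ℝ) - 1) * π / k))
                   (pt N (r * Real.sqrt (1 - h ^ 2)) (r * h) w 0) ≤
            dist y (pt N (r * Real.sqrt (1 - h ^ 2)) (r * h) w (2 * ((j : ℝ) - 1) * π / k)) := by
  have hπ : (0 : ℝ) < π := Real.pi_pos
  refine ⟨1 / (2 * π), by positivity, ?_⟩
  intro k hk y hy j hj1 hjk
  set ρ : ℝ := r * Real.sqrt (1 - h ^ 2) with hρ_def
  have hρ : 0 ≤ ρ := mul_nonneg hr.le (Real.sqrt_nonneg _)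
  rcases eq_or_lt_of_le hj1 with hj | hj2
  · -- j = 1 : the two points coincide
    subst hj
    have h0 : 2 * ((1 : ℕ) - 1 : ℝ) * π / k = 0 := by norm_num
    rw [h0, dist_self, mul_zero]
    exact dist_nonneg
  · have hj2 : 2 ≤ j := hj2
    have hk0 : (0 : ℝ) < k := by positivity
    set θ : ℝ := 2 * ((j : ℝ) - 1) * π / k with hθ_def
    have hj2' : (2 : ℝ) ≤ (j : ℝ) := by exact_mod_cast hj2
    have hjk' : (j : ℝ) ≤ (k : ℝ) := by exact_mod_cast hjk
    have hu : 0 < π / (k : ℝ) := by positivity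
    have e1 : θ = (2 * ((j : ℝ) - 1)) * (π / k) := by rw [hθ_def]; ring
    have hθ1 : 2 * (π / k) ≤ θ := by
      rw [e1]
      exact mul_le_mul_of_nonneg_right (by linarith : (2:ℝ) ≤ 2 * ((j : ℝ) - 1)) hu.le
    have hθ2 : θ ≤ 2 * π - 2 * (π / k) := by
      have e2 : 2 * π - 2 * (π / (k : ℝ)) = (2 * ((k : ℝ) - 1)) * (π / k) := by
        field_simp
      rw [e1, e2]
      exact mul_le_mul_of_nonneg_right (by linarith : 2 * ((j:ℝ) - 1) ≤ 2 * ((k:ℝ) - 1)) hu.le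
    have hu2 : π / k ≤ π / 2 := by
      apply div_le_div_of_nonneg_left hπ.le (by norm_num) _
      exact_mod_cast hk
    have hθhalf0 : 0 ≤ θ / 2 := by linarith
    have hθhalfπ : θ / 2 ≤ π := by linarith
    have hsinθ2 : 0 ≤ Real.sin (θ / 2) :=
      Real.sin_nonneg_of_nonneg_of_le_pi hθhalf0 hθhalfπ
    set i0 : Fin N := ⟨0, by omega⟩ with hi0_def
    set i1 : Fin N := ⟨1, by omega⟩ with hi1_def
    have hi01 : i0 ≠ i1 := by simp [hi0_def, hi1_def, Fin.ext_iff]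
    -- distance between the two concentration points
    have hdist1 : dist (pt N ρ (r * h) w θ) (pt N ρ (r * h) w 0) = 2 * ρ * Real.sin (θ / 2) := by
      rw [EuclideanSpace.dist_eq]
      have hsum : ∑ i : Fin N, dist (pt N ρ (r * h) w θ i) (pt N ρ (r * h) w 0 i) ^ 2 =
          (ρ * Real.cos θ - ρ * Real.cos 0) ^ 2 + (ρ * Real.sin θ - ρ * Real.sin 0) ^ 2 := by
        rw [← Finset.sum_subset (Finset.subset_univ ({i0, i1} : Finset (Fin N)))
          (fun x _ hx => ?_)]
        · rw [Finset.sum_pair hi01]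
          simp only [pt, hi0_def, hi1_def]
          norm_num [Real.dist_eq, sq_abs]
          rw [← abs_mul, sq_abs]
        · simp only [Finset.mem_insert, Finset.mem_singleton] at hx
          push_neg at hx
          have hx0 : (x : ℕ) ≠ 0 := fun hc => hx.1 (by simp [hi0_def, Fin.ext_iff, hc])
          have hx1 : (x : ℕ) ≠ 1 := fun hc => hx.2 (by simp [hi1_def, Fin.ext_iff, hc])
          simp only [pt, hx0, hx1, if_false]
          by_cases hx2 : (x : ℕ) = 2 <;> simp [hx2]
      rw [hsum]
      have hhalf : Real.sin (θ / 2) ^ 2 = 1 / 2 - Real.cos (2 * (θ / 2)) / 2 :=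
        Real.sin_sq_eq_half_sub _
      have h2 : 2 * (θ / 2) = θ := by ring
      rw [h2] at hhalf
      have heq : (ρ * Real.cos θ - ρ * Real.cos 0) ^ 2 + (ρ * Real.sin θ - ρ * Real.sin 0) ^ 2 =
          (2 * ρ * Real.sin (θ / 2)) ^ 2 := by
        rw [Real.cos_zero, Real.sin_zero]
        linear_combination ρ ^ 2 * Real.sin_sq_add_cos_sq θ - 4 * ρ ^ 2 * hhalf
      rw [heq, Real.sqrt_sq (by positivity)]
    -- the sector condition
    set s : ℝ := ‖(⟨y i0, y i1⟩ : ℂ)‖ with hs_def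
    set φ : ℝ := Complex.arg ⟨y i0, y i1⟩ with hφ_def
    have hs0 : 0 ≤ s := norm_nonneg _
    have hy0 : y i0 = s * Real.cos φ := by
      rw [hs_def, hφ_def]
      exact (Complex.norm_mul_cos_arg ⟨y i0, y i1⟩).symm
    have hy1 : y i1 = s * Real.sin φ := by
      rw [hs_def, hφ_def]
      exact (Complex.norm_mul_sin_arg ⟨y i0, y i1⟩).symm
    have habs : s = Real.sqrt (y i0 ^ 2 + y i1 ^ 2) := by
      rw [hs_def, Complex.norm_def, Complex.normSq_apply]
      ring_nf
    have hφle : |φ| ≤ π / k := by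
      by_cases hc : (⟨y i0, y i1⟩ : ℂ) = 0
      · rw [hφ_def, hc, Complex.arg_zero, abs_zero]
        positivity
      · have hspos : 0 < s := by
          rw [hs_def]
          exact norm_pos_iff.mpr hc
        have hy' : Real.cos (π / k) ≤ y i0 / Real.sqrt (y i0 ^ 2 + y i1 ^ 2) := hy
        rw [← habs, hy0] at hy'
        rw [mul_div_cancel_left₀ _ hspos.ne'] at hy'
        by_contra hcon
        push_neg at hcon
        have hφπ : |φ| ≤ π := Complex.abs_arg_le_pi _
        have := Real.cos_lt_cos_of_nonneg_of_le_pi (by positivity : (0:ℝ) ≤ π / k) hφπ hcon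
        rw [Real.cos_abs] at this
        linarith
    -- lower bound for the distance
    have hlow : Real.sqrt ((y i0 - ρ * Real.cos θ) ^ 2 + (y i1 - ρ * Real.sin θ) ^ 2) ≤
        dist y (pt N ρ (r * h) w θ) := by
      rw [EuclideanSpace.dist_eq]
      apply Real.sqrt_le_sqrt
      have hpair : (y i0 - ρ * Real.cos θ) ^ 2 + (y i1 - ρ * Real.sin θ) ^ 2 =
          ∑ i ∈ ({i0, i1} : Finset (Fin N)), dist (y i) (pt N ρ (r * h) w θ i) ^ 2 := by
        rw [Finset.sum_pair hi01]
        simp only [pt, hi0_def, hi1_def]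
        norm_num [Real.dist_eq, sq_abs]
      rw [hpair]
      exact Finset.sum_le_sum_of_subset_of_nonneg (Finset.subset_univ _)
        (fun i _ _ => by positivity)
    have hcore := core_est ρ s φ θ (π / k) hρ hs0 hu hu2 hφle hθ1 hθ2
    rw [← hy0, ← hy1] at hcore
    have hsqrt : ρ * Real.sin (θ / 2) / π ≤
        Real.sqrt ((y i0 - ρ * Real.cos θ) ^ 2 + (y i1 - ρ * Real.sin θ) ^ 2) := by
      have h1 : ρ * Real.sin (θ / 2) / π = Real.sqrt ((ρ * Real.sin (θ / 2) / π) ^ 2) := by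
        rw [Real.sqrt_sq (by positivity)]
      rw [h1]
      exact Real.sqrt_le_sqrt hcore
    have hfin : 1 / (2 * π) * (2 * ρ * Real.sin (θ / 2)) = ρ * Real.sin (θ / 2) / π := by
      field_simp
    calc 1 / (2 * π) * dist (pt N ρ (r * h) w θ) (pt N ρ (r * h) w 0)
        = ρ * Real.sin (θ / 2) / π := by rw [hdist1, hfin]
      _ ≤ Real.sqrt ((y i0 - ρ * Real.cos θ) ^ 2 + (y i1 - ρ * Real.sin θ) ^ 2) := hsqrt
      _ ≤ dist y (pt N ρ (r * h) w θ) := hlow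
end
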